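/- Let σ, ζ, c, d, β be positive real numbers, let M ≥ 1, τ ≥ 1, R > 0 be real numbers, and set K = M·τ·R. Assume the data-heterogeneity condition σ ≤ ζ + c and that the number of local steps satisfies τ ≤ (σ/(ζ+c))·√((σ/(d·β))·(K^{1/2}/M²)). Then the convergence error upper bound is dominated by the O(1/√K) term; precisely, 2βd²/(τR) + 2σd/√(MτR) + 5β^{1/3}σ^{2/3}d^{4/3}/(τ^{1/3}R^{2/3}) + 15β^{1/3}(ζ+c)^{2/3}d^{4/3}/R^{2/3} ≤ 24·σ·d/√K. -/
import Mathlib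

set_option maxHeartbeats 1000000


/-- Proposition 3.2 (full form): under the data-heterogeneity condition `σ ≤ ζ + c` and the
admissible bound on the number of local steps `τ`, the convergence error upper bound of
Theorem 3.1 is dominated by the `O(1/√K)` term, where `K = M·τ·R`. -/
theorem lss_error_bound_dominated_by_sqrtK
    (σ ζ c d β M τ R : ℝ)
    (hσ : 0 < σ) (hζ : 0 < ζ) (hc : 0 < c) (hd : 0 < d) (hβ : 0 < β)
    (hM : 1 ≤ M) (hτ : 1 ≤ τ) (hR : 0 < R)
    (K : ℝ) (hK : K = M * τ * R)
    (hhet : σ ≤ ζ + c)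
    (hτle : τ ≤ (σ / (ζ + c)) * Real.sqrt ((σ / (d * β)) * (K ^ ((1 : ℝ) / 2) / M ^ 2))) :
    2 * β * d ^ 2 / (τ * R)
      + 2 * σ * d / Real.sqrt (M * τ * R)
      + 5 * β ^ ((1 : ℝ) / 3) * σ ^ ((2 : ℝ) / 3) * d ^ ((4 : ℝ) / 3)
          / (τ ^ ((1 : ℝ) / 3) * R ^ ((2 : ℝ) / 3))
      + 15 * β ^ ((1 : ℝ) / 3) * (ζ + c) ^ ((2 : ℝ) / 3) * d ^ ((4 : ℝ) / 3)
          / R ^ ((2 : ℝ) / 3)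
      ≤ 24 * σ * d / Real.sqrt K := by
  subst hK
  have hτ0 : 0 < τ := lt_of_lt_of_le one_pos hτ
  have hM0 : 0 < M := lt_of_lt_of_le one_pos hM
  have hP : 0 < M * τ * R := by positivity
  set S := Real.sqrt (M * τ * R) with hSdef
  have hSpos : 0 < S := Real.sqrt_pos.mpr hP
  have hS2 : S ^ 2 = M * τ * R := Real.sq_sqrt hP.le
  have hζc : 0 < ζ + c := by linarith
  -- rewrite the rpow 1/2 as a sqrt
  have hrw : (M * τ * R) ^ ((1 : ℝ) / 2) = S := by
    rw [hSdef, Real.sqrt_eq_rpow]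
  rw [hrw] at hτle
  -- square the hypothesis on τ
  have hE : (0:ℝ) ≤ (σ / (d * β)) * (S / M ^ 2) := by positivity
  have h2 : τ ^ 2 ≤ (σ / (ζ + c)) ^ 2 * ((σ / (d * β)) * (S / M ^ 2)) := by
    have hsq := pow_le_pow_left₀ hτ0.le hτle 2
    calc τ ^ 2 ≤ (σ / (ζ + c) * Real.sqrt ((σ / (d * β)) * (S / M ^ 2))) ^ 2 := hsq
      _ = (σ / (ζ + c)) ^ 2 * (Real.sqrt ((σ / (d * β)) * (S / M ^ 2))) ^ 2 := by ring
      _ = (σ / (ζ + c)) ^ 2 * ((σ / (d * β)) * (S / M ^ 2)) := by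
          rw [Real.sq_sqrt hE]
  -- clear denominators: key inequality
  have h2' : τ ^ 2 * ((ζ + c) ^ 2 * ((d * β) * M ^ 2)) ≤ σ ^ 2 * (σ * S) := by
    have e : (σ / (ζ + c)) ^ 2 * ((σ / (d * β)) * (S / M ^ 2))
        = (σ ^ 2 * (σ * S)) / ((ζ + c) ^ 2 * ((d * β) * M ^ 2)) := by
      field_simp
    rw [e, le_div_iff₀ (by positivity)] at h2
    exact h2
  have key : β * d * (ζ + c) ^ 2 * τ ^ 2 * M ^ 2 ≤ σ ^ 3 * S := by
    calc β * d * (ζ + c) ^ 2 * τ ^ 2 * M ^ 2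
        = τ ^ 2 * ((ζ + c) ^ 2 * ((d * β) * M ^ 2)) := by ring
      _ ≤ σ ^ 2 * (σ * S) := h2'
      _ = σ ^ 3 * S := by ring
  -- weaker key using σ ≤ ζ + c
  have hsq2 : σ ^ 2 ≤ (ζ + c) ^ 2 := pow_le_pow_left₀ hσ.le hhet 2
  have key1 : β * d * τ ^ 2 * M ^ 2 ≤ σ * S := by
    have h : σ ^ 2 * (β * d * τ ^ 2 * M ^ 2) ≤ σ ^ 2 * (σ * S) := by
      nlinarith [key, hsq2, mul_pos (mul_pos (mul_pos hβ hd) (pow_pos hτ0 2)) (pow_pos hM0 2)]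
    exact le_of_mul_le_mul_left h (by positivity)
  -- bound for term 1
  have hA : β * d * τ ^ 2 * M ^ 2 * S ≤ σ * (M * τ * R) := by
    calc β * d * τ ^ 2 * M ^ 2 * S ≤ σ * S * S := mul_le_mul_of_nonneg_right key1 hSpos.le
      _ = σ * S ^ 2 := by ring
      _ = σ * (M * τ * R) := by rw [hS2]
  have ht2M : 1 ≤ τ ^ 2 * M := by nlinarith
  have hq' : σ * (M * τ * R) ≤ σ * τ * R * (τ ^ 2 * M ^ 2) := by
    nlinarith [mul_nonneg (by positivity : (0:ℝ) ≤ σ * M * τ * R) (sub_nonneg.mpr ht2M)]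
  have h1 : β * d * S ≤ σ * τ * R := by
    have h' : (β * d * S) * (τ ^ 2 * M ^ 2) ≤ (σ * τ * R) * (τ ^ 2 * M ^ 2) := by
      calc (β * d * S) * (τ ^ 2 * M ^ 2) = β * d * τ ^ 2 * M ^ 2 * S := by ring
        _ ≤ σ * (M * τ * R) := hA
        _ ≤ σ * τ * R * (τ ^ 2 * M ^ 2) := hq'
    exact le_of_mul_le_mul_right h' (by positivity)
  -- bound for term 3
  have h3 : β * d * S ^ 3 ≤ σ * R ^ 2 := by
    have h' : (β * d * S ^ 3) * (τ ^ 2 * M ^ 2) ≤ (σ * R ^ 2) * (τ ^ 2 * M ^ 2) := by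
      calc (β * d * S ^ 3) * (τ ^ 2 * M ^ 2) = (β * d * τ ^ 2 * M ^ 2) * S ^ 3 := by ring
        _ ≤ (σ * S) * S ^ 3 := mul_le_mul_of_nonneg_right key1 (by positivity)
        _ = σ * (S ^ 2) ^ 2 := by ring
        _ = σ * (M * τ * R) ^ 2 := by rw [hS2]
        _ = (σ * R ^ 2) * (τ ^ 2 * M ^ 2) := by ring
    exact le_of_mul_le_mul_right h' (by positivity)
  -- bound for term 4
  have h4 : β * (ζ + c) ^ 2 * d * S ^ 3 ≤ σ ^ 3 * R ^ 2 := by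
    have h' : (β * (ζ + c) ^ 2 * d * S ^ 3) * (τ ^ 2 * M ^ 2)
        ≤ (σ ^ 3 * R ^ 2) * (τ ^ 2 * M ^ 2) := by
      calc (β * (ζ + c) ^ 2 * d * S ^ 3) * (τ ^ 2 * M ^ 2)
          = (β * d * (ζ + c) ^ 2 * τ ^ 2 * M ^ 2) * S ^ 3 := by ring
        _ ≤ (σ ^ 3 * S) * S ^ 3 := mul_le_mul_of_nonneg_right key (by positivity)
        _ = σ ^ 3 * (S ^ 2) ^ 2 := by ring
        _ = σ ^ 3 * (M * τ * R) ^ 2 := by rw [hS2]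
        _ = (σ ^ 3 * R ^ 2) * (τ ^ 2 * M ^ 2) := by ring
    exact le_of_mul_le_mul_right h' (by positivity)
  -- cube identities for rpow
  have eβ : (β ^ ((1:ℝ)/3)) ^ 3 = β := by
    rw [← Real.rpow_natCast (β ^ ((1:ℝ)/3)) 3, ← Real.rpow_mul hβ.le]
    norm_num
  have eσ : (σ ^ ((2:ℝ)/3)) ^ 3 = σ ^ 2 := by
    rw [← Real.rpow_natCast (σ ^ ((2:ℝ)/3)) 3, ← Real.rpow_mul hσ.le,
      ← Real.rpow_natCast σ 2]
    norm_num
  have ed : (d ^ ((4:ℝ)/3)) ^ 3 = d ^ 4 := by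
    rw [← Real.rpow_natCast (d ^ ((4:ℝ)/3)) 3, ← Real.rpow_mul hd.le,
      ← Real.rpow_natCast d 4]
    norm_num
  have eτ : (τ ^ ((1:ℝ)/3)) ^ 3 = τ := by
    rw [← Real.rpow_natCast (τ ^ ((1:ℝ)/3)) 3, ← Real.rpow_mul hτ0.le]
    norm_num
  have eR : (R ^ ((2:ℝ)/3)) ^ 3 = R ^ 2 := by
    rw [← Real.rpow_natCast (R ^ ((2:ℝ)/3)) 3, ← Real.rpow_mul hR.le,
      ← Real.rpow_natCast R 2]
    norm_num
  have eζc : ((ζ + c) ^ ((2:ℝ)/3)) ^ 3 = (ζ + c) ^ 2 := by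
    rw [← Real.rpow_natCast ((ζ + c) ^ ((2:ℝ)/3)) 3, ← Real.rpow_mul hζc.le,
      ← Real.rpow_natCast (ζ + c) 2]
    norm_num
  -- term 1 bound
  have B1 : 2 * β * d ^ 2 / (τ * R) ≤ 2 * σ * d / S := by
    rw [div_le_div_iff₀ (by positivity) hSpos]
    nlinarith [mul_le_mul_of_nonneg_left h1 (by positivity : (0:ℝ) ≤ 2 * d)]
  -- term 3 bound
  have B3 : 5 * β ^ ((1:ℝ)/3) * σ ^ ((2:ℝ)/3) * d ^ ((4:ℝ)/3)
      / (τ ^ ((1:ℝ)/3) * R ^ ((2:ℝ)/3)) ≤ 5 * σ * d / S := by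
    rw [div_le_div_iff₀ (by positivity) hSpos]
    have hRHS : (5 * σ * d * (τ ^ ((1:ℝ)/3) * R ^ ((2:ℝ)/3))) ^ 3
        = 125 * (σ ^ 3 * d ^ 3) * (τ * R ^ 2) := by
      calc (5 * σ * d * (τ ^ ((1:ℝ)/3) * R ^ ((2:ℝ)/3))) ^ 3
          = 125 * σ ^ 3 * d ^ 3 * ((τ ^ ((1:ℝ)/3)) ^ 3 * (R ^ ((2:ℝ)/3)) ^ 3) := by ring
        _ = 125 * (σ ^ 3 * d ^ 3) * (τ * R ^ 2) := by rw [eτ, eR]; ring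
    have hcube : (5 * β ^ ((1:ℝ)/3) * σ ^ ((2:ℝ)/3) * d ^ ((4:ℝ)/3) * S) ^ 3
        ≤ (5 * σ * d * (τ ^ ((1:ℝ)/3) * R ^ ((2:ℝ)/3))) ^ 3 := by
      calc (5 * β ^ ((1:ℝ)/3) * σ ^ ((2:ℝ)/3) * d ^ ((4:ℝ)/3) * S) ^ 3
          = 125 * ((β ^ ((1:ℝ)/3)) ^ 3 * (σ ^ ((2:ℝ)/3)) ^ 3 * (d ^ ((4:ℝ)/3)) ^ 3) * S ^ 3 := by
            ring
        _ = 125 * (β * σ ^ 2 * d ^ 4) * S ^ 3 := by rw [eβ, eσ, ed]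
        _ ≤ 125 * (σ ^ 3 * d ^ 3) * (τ * R ^ 2) := by
            nlinarith [mul_le_mul_of_nonneg_left h3 (by positivity : (0:ℝ) ≤ 125 * σ ^ 2 * d ^ 3),
              mul_pos (mul_pos (pow_pos hσ 3) (pow_pos hd 3)) (pow_pos hR 2), hτ]
        _ = (5 * σ * d * (τ ^ ((1:ℝ)/3) * R ^ ((2:ℝ)/3))) ^ 3 := hRHS.symm
    exact le_of_pow_le_pow_left₀ (by norm_num) (by positivity) hcube
  -- term 4 bound
  have B4 : 15 * β ^ ((1:ℝ)/3) * (ζ + c) ^ ((2:ℝ)/3) * d ^ ((4:ℝ)/3)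
      / R ^ ((2:ℝ)/3) ≤ 15 * σ * d / S := by
    rw [div_le_div_iff₀ (by positivity) hSpos]
    have hRHS : (15 * σ * d * R ^ ((2:ℝ)/3)) ^ 3
        = 3375 * (σ ^ 3 * d ^ 3) * R ^ 2 := by
      calc (15 * σ * d * R ^ ((2:ℝ)/3)) ^ 3
          = 3375 * σ ^ 3 * d ^ 3 * (R ^ ((2:ℝ)/3)) ^ 3 := by ring
        _ = 3375 * (σ ^ 3 * d ^ 3) * R ^ 2 := by rw [eR]; ring
    have hcube : (15 * β ^ ((1:ℝ)/3) * (ζ + c) ^ ((2:ℝ)/3) * d ^ ((4:ℝ)/3) * S) ^ 3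
        ≤ (15 * σ * d * R ^ ((2:ℝ)/3)) ^ 3 := by
      calc (15 * β ^ ((1:ℝ)/3) * (ζ + c) ^ ((2:ℝ)/3) * d ^ ((4:ℝ)/3) * S) ^ 3
          = 3375 * ((β ^ ((1:ℝ)/3)) ^ 3 * ((ζ + c) ^ ((2:ℝ)/3)) ^ 3 * (d ^ ((4:ℝ)/3)) ^ 3)
              * S ^ 3 := by ring
        _ = 3375 * (β * (ζ + c) ^ 2 * d ^ 4) * S ^ 3 := by rw [eβ, eζc, ed]
        _ ≤ 3375 * (σ ^ 3 * d ^ 3) * R ^ 2 := by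
            nlinarith [mul_le_mul_of_nonneg_left h4 (by positivity : (0:ℝ) ≤ 3375 * d ^ 3)]
        _ = (15 * σ * d * R ^ ((2:ℝ)/3)) ^ 3 := hRHS.symm
    exact le_of_pow_le_pow_left₀ (by norm_num) (by positivity) hcube
  have hsum : 2 * σ * d / S + 2 * σ * d / S + 5 * σ * d / S + 15 * σ * d / S
      = 24 * σ * d / S := by ring
  linarith [B1, B3, B4]
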